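/- arXiv:1705.06473 — 4 statements merged into one kernel-verified Lean document; each statement's English description precedes it below -/
import Mathlib

section
/- For k ≥ 2 and p ∈ (0,1), the difference p^{k-1} - (2p^k - p^{2k}) factors as p^{k-1}(p-1)(p^k + p^{k-1} + ... + p - 1). Consequently this difference is positive for p < γ_k and negative for p > γ_k, where γ_k is the unique root of p^k + ... + p - 1 in (0,1). -/
/-! Multiplying `S_k(p) = p + ⋯ + p^k` by `p - 1` telescopes to `p^{k+1} - p`, which turns the
claimed factorization into a polynomial identity. For `p ∈ (0,1)` the factor `p^{k-1}(p - 1)` is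
negative, so the difference has the sign of `1 - S_k(p)`; as `S_k` is strictly increasing on
`[0, ∞)` and `S_k(γ) = 1`, this sign changes exactly at `γ`. -/

open Finset

theorem geom_sum_Icc_one_mul {R : Type*} [Ring R] (x : R) (n : ℕ) :
    (∑ i ∈ Icc 1 n, x ^ i) * (x - 1) = x ^ (n + 1) - x := by
  rw [← Ico_add_one_right_eq_Icc, geom_sum_Ico_mul x (by omega), pow_one]

theorem pow_pred_sub_two_mul_pow_add_pow_two_mul {R : Type*} [CommRing R] {k : ℕ} (hk : 1 ≤ k)
    (p : R) :
    p ^ (k - 1) - (2 * p ^ k - p ^ (2 * k)) =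
      p ^ (k - 1) * (p - 1) * ((∑ i ∈ Icc 1 k, p ^ i) - 1) := by
  obtain ⟨m, rfl⟩ : ∃ m, k = m + 1 := ⟨k - 1, by omega⟩
  rw [Nat.add_sub_cancel]
  linear_combination (-p ^ m) * geom_sum_Icc_one_mul p (m + 1)

theorem sum_Icc_one_pow_lt_sum_Icc_one_pow {n : ℕ} (hn : 1 ≤ n) {p q : ℝ} (hp : 0 ≤ p)
    (hpq : p < q) : ∑ i ∈ Icc 1 n, p ^ i < ∑ i ∈ Icc 1 n, q ^ i :=
  sum_lt_sum (fun i _ => pow_le_pow_left₀ hp hpq.le i)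
    ⟨1, mem_Icc.mpr ⟨le_rfl, hn⟩, by simpa using hpq⟩

theorem pow_pred_mul_sub_one_neg {p : ℝ} (hp : p ∈ Set.Ioo (0 : ℝ) 1) (k : ℕ) :
    p ^ (k - 1) * (p - 1) < 0 :=
  mul_neg_of_pos_of_neg (pow_pos hp.1 _) (by linarith [hp.2])

/-- For `k ≥ 2` and `p ∈ (0,1)`, the difference `p^{k-1} - (2p^k - p^{2k})`
factors as `p^{k-1}(p-1)(p^k + ⋯ + p - 1)`; consequently it is positive for
`p < γ_k` and negative for `p > γ_k`, where `γ_k` is the unique root of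
`p^k + ⋯ + p - 1` in `(0,1)`. -/
theorem stmt_2 (k : ℕ) (hk : 2 ≤ k) (γ : ℝ) (hγ : γ ∈ Set.Ioo (0 : ℝ) 1)
    (hroot : (∑ i ∈ Finset.Icc 1 k, γ ^ i) - 1 = 0) :
    (∀ p : ℝ, p ^ (k - 1) - (2 * p ^ k - p ^ (2 * k)) =
      p ^ (k - 1) * (p - 1) * ((∑ i ∈ Finset.Icc 1 k, p ^ i) - 1)) ∧
    (∀ p ∈ Set.Ioo (0 : ℝ) 1, p < γ →
      0 < p ^ (k - 1) - (2 * p ^ k - p ^ (2 * k))) ∧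
    (∀ p ∈ Set.Ioo (0 : ℝ) 1, γ < p →
      p ^ (k - 1) - (2 * p ^ k - p ^ (2 * k)) < 0) := by
  have hk1 : 1 ≤ k := by omega
  have factor := pow_pred_sub_two_mul_pow_add_pow_two_mul (R := ℝ) hk1
  refine ⟨factor, fun p hp hpγ => ?_, fun p hp hγp => ?_⟩
  · have below := sum_Icc_one_pow_lt_sum_Icc_one_pow hk1 hp.1.le hpγ
    rw [factor]
    exact mul_pos_of_neg_of_neg (pow_pred_mul_sub_one_neg hp k) (by linarith)
  · have above := sum_Icc_one_pow_lt_sum_Icc_one_pow hk1 hγ.1.le hγp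
    rw [factor]
    exact mul_neg_of_neg_of_pos (pow_pred_mul_sub_one_neg hp k) (by linarith)
end

section
/- Let p_1, p_2 : ℝ → ℝ be polynomials and z ∈ (0,1) with p_1(z) = p_2(z). Then the function x ↦ min(p_1(x), p_2(x)) fails to be m-times differentiable (but is (m-1)-times differentiable) at z if and only if p_1 - p_2 has a zero of odd order m at z. -/
/-!
With `q = p₁ - p₂` we have `min p₁ p₂ = (p₁ + p₂ - |q|) / 2`, so only the smoothness of `|q|` at
`z` matters. Writing `q = (X - z)^k r` with `r(z) ≠ 0`, `|q|` is `|x - z|^k` times the smooth,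
nonvanishing function `|r|` near `z`, so its smoothness class at `z` is that of `|x|^k` at `0`.
For even `k` this is smooth; for odd `k = 2j + 1` it equals `x^(2j) |x|`, which is `C^(2j)` but not
`C^(2j+1)`: differentiating `x^(i+1) |x|` gives `(i + 2) x^i |x|`, and this ends at `|x|`.
-/

open Polynomial

section ContDiffAt

variable {𝕜 E F : Type*} [NontriviallyNormedField 𝕜] [NormedAddCommGroup E] [NormedSpace 𝕜 E]
  [NormedAddCommGroup F] [NormedSpace 𝕜 F] {n : WithTop ℕ∞}

theorem contDiffAt_comp_sub_const_iff {f : E → F} {a : E} :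
    ContDiffAt 𝕜 n (fun x => f (x - a)) a ↔ ContDiffAt 𝕜 n f 0 := by
  constructor
  · intro h
    have h' : ContDiffAt 𝕜 n (fun x => f (x - a)) (0 + a) := by rwa [zero_add]
    simpa [Function.comp_def] using h'.comp 0 (contDiffAt_id.add contDiffAt_const)
  · intro h
    have h' : ContDiffAt 𝕜 n f (a - a) := by rwa [sub_self]
    exact h'.comp a (f := fun x => x - a) (contDiffAt_id.sub contDiffAt_const)

theorem contDiffAt_mul_iff_of_ne_zero {f u : E → 𝕜} {x : E} (hu : ContDiffAt 𝕜 n u x)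
    (hux : u x ≠ 0) : ContDiffAt 𝕜 n (fun y => f y * u y) x ↔ ContDiffAt 𝕜 n f x := by
  refine ⟨fun h => ?_, fun h => h.mul hu⟩
  refine (h.mul (hu.fun_inv hux)).congr_of_eventuallyEq ?_
  filter_upwards [hu.continuousAt.eventually_ne hux] with y hy
  rw [mul_inv_cancel_right₀ hy]

theorem Polynomial.contDiff_eval (p : 𝕜[X]) (n : WithTop ℕ∞) : ContDiff 𝕜 n fun x => p.eval x := by
  simpa using p.contDiff_aeval (𝕜 := 𝕜) n

end ContDiffAt

theorem contDiffAt_min_iff_contDiffAt_abs_sub {E : Type*} [NormedAddCommGroup E]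
    [NormedSpace ℝ E] {n : WithTop ℕ∞} {f g : E → ℝ} {x : E} (hf : ContDiffAt ℝ n f x)
    (hg : ContDiffAt ℝ n g x) :
    ContDiffAt ℝ n (fun y => min (f y) (g y)) x ↔ ContDiffAt ℝ n (fun y => |f y - g y|) x := by
  have hmin (a b : ℝ) : min a b = (a + b - |a - b|) / 2 := by
    rcases le_total a b with h | h
    · rw [min_eq_left h, abs_of_nonpos (sub_nonpos.mpr h)]; ring
    · rw [min_eq_right h, abs_of_nonneg (sub_nonneg.mpr h)]; ring
  simp_rw [hmin]
  constructor
  · intro h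
    convert (hf.add hg).sub (h.const_smul (2 : ℝ)) using 1
    ext y; simp only [smul_eq_mul]; ring
  · intro h
    exact ((hf.add hg).sub h).div_const 2

theorem hasDerivAt_pow_succ_mul_abs (m : ℕ) (x : ℝ) :
    HasDerivAt (fun y : ℝ => y ^ (m + 1) * |y|) (x ^ m * |x| * (m + 2)) x := by
  rcases eq_or_ne x 0 with rfl | hx
  · rw [hasDerivAt_iff_tendsto_slope]
    have hlim : Filter.Tendsto (fun y : ℝ => y ^ m * |y|) (nhdsWithin 0 {0}ᶜ) (nhds 0) := by
      have hcont : Continuous fun y : ℝ => y ^ m * |y| := by fun_prop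
      simpa using (hcont.tendsto 0).mono_left nhdsWithin_le_nhds
    simp only [abs_zero, mul_zero, zero_mul]
    refine hlim.congr' ?_
    filter_upwards [self_mem_nhdsWithin] with y (hy : y ≠ 0)
    simp only [slope_def_field, zero_pow (Nat.succ_ne_zero m), zero_mul, sub_zero]
    field_simp
    ring
  · refine ((hasDerivAt_pow (m + 1) x).mul (hasDerivAt_abs hx)).congr_deriv ?_
    rw [Nat.add_sub_cancel, pow_succ, mul_assoc (x ^ m), self_mul_sign]
    push_cast
    ring

theorem deriv_pow_succ_mul_abs (m : ℕ) :
    deriv (fun y : ℝ => y ^ (m + 1) * |y|) = fun x : ℝ => x ^ m * |x| * ((m : ℝ) + 2) :=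
  funext fun x => (hasDerivAt_pow_succ_mul_abs m x).deriv

theorem contDiff_pow_mul_abs (m : ℕ) : ContDiff ℝ m (fun x : ℝ => x ^ m * |x|) := by
  induction m with
  | zero => simpa using continuous_abs
  | succ m ih =>
    rw [Nat.cast_succ, contDiff_succ_iff_deriv, deriv_pow_succ_mul_abs]
    exact ⟨fun x => (hasDerivAt_pow_succ_mul_abs m x).differentiableAt, by simp,
      ih.mul contDiff_const⟩

theorem not_contDiffAt_pow_mul_abs (m : ℕ) :
    ¬ ContDiffAt ℝ (m + 1) (fun x : ℝ => x ^ m * |x|) 0 := by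
  induction m with
  | zero =>
    intro h
    exact not_differentiableAt_abs_zero (by simpa using h.differentiableAt (by simp))
  | succ m ih =>
    intro h
    have hderiv := h.derivWithin (m := m + 1) (by push_cast; rfl)
    rw [deriv_pow_succ_mul_abs] at hderiv
    exact ih ((contDiffAt_mul_iff_of_ne_zero (u := fun _ => (m : ℝ) + 2) contDiffAt_const
      (by positivity)).mp hderiv)

theorem contDiffAt_abs_pow_iff {k : ℕ} {n : ℕ∞} :
    ContDiffAt ℝ n (fun x : ℝ => |x| ^ k) 0 ↔ Even k ∨ n < k := by
  rcases Nat.even_or_odd' k with ⟨j, rfl | rfl⟩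
  · simp only [even_two_mul, true_or, iff_true, (even_two_mul j).pow_abs]
    exact (contDiff_id.pow _).contDiffAt
  · have hpow : (fun x : ℝ => |x| ^ (2 * j + 1)) = fun x => x ^ (2 * j) * |x| := by
      ext x; rw [pow_succ, (even_two_mul j).pow_abs]
    simp only [hpow, Nat.not_even_bit1, false_or]
    constructor
    · intro h
      by_contra! hn
      refine not_contDiffAt_pow_mul_abs (2 * j) (h.of_le ?_)
      rw [← Nat.cast_succ]
      exact WithTop.coe_le_coe.mpr hn
    · intro hn
      rw [Nat.cast_succ, ENat.lt_add_one_iff (ENat.natCast_ne_top _)] at hn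
      exact ((contDiff_pow_mul_abs (2 * j)).of_le (WithTop.coe_le_coe.mpr hn)).contDiffAt

theorem Polynomial.contDiffAt_abs_eval_iff (q : ℝ[X]) (z : ℝ) (n : ℕ∞) :
    ContDiffAt ℝ n (fun x => |q.eval x|) z ↔
      Even (q.rootMultiplicity z) ∨ n < q.rootMultiplicity z := by
  rcases eq_or_ne q 0 with rfl | hq
  · simp [contDiffAt_const]
  set k := q.rootMultiplicity z
  set r := q /ₘ (X - C z) ^ k
  have hr : r.eval z ≠ 0 := eval_divByMonic_pow_rootMultiplicity_ne_zero z hq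
  have hfactor : (fun x => |q.eval x|) = fun x => |x - z| ^ k * |r.eval x| := by
    ext x
    conv_lhs => rw [← pow_mul_divByMonic_rootMultiplicity_eq q z]
    simp [abs_mul, abs_pow, k, r]
  rw [hfactor,
    contDiffAt_mul_iff_of_ne_zero ((r.contDiff_eval n).contDiffAt.abs hr) (abs_ne_zero.mpr hr),
    contDiffAt_comp_sub_const_iff (f := fun x => |x| ^ k), contDiffAt_abs_pow_iff]

theorem stmt_5_general (p₁ p₂ : Polynomial ℝ) (z : ℝ) (m : ℕ) :
    (ContDiffAt ℝ ((m - 1 : ℕ) : ℕ∞) (fun x => min (p₁.eval x) (p₂.eval x)) z ∧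
      ¬ ContDiffAt ℝ ((m : ℕ) : ℕ∞) (fun x => min (p₁.eval x) (p₂.eval x)) z)
    ↔ (Odd m ∧ Polynomial.rootMultiplicity z (p₁ - p₂) = m) := by
  simp only [contDiffAt_min_iff_contDiffAt_abs_sub (p₁.contDiff_eval _).contDiffAt
    (p₂.contDiff_eval _).contDiffAt, ← eval_sub]
  rw [contDiffAt_abs_eval_iff, contDiffAt_abs_eval_iff, Nat.cast_lt, Nat.cast_lt]
  generalize (p₁ - p₂).rootMultiplicity z = k
  rcases Nat.even_or_odd k with hk | hk
  · simp only [hk, true_or, not_true_eq_false, and_false, false_iff, not_and]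
    rintro hodd rfl
    exact Nat.not_even_iff_odd.mpr hodd hk
  · have hk₀ := hk.pos
    simp only [Nat.not_even_iff_odd.mpr hk, false_or, not_lt]
    constructor
    · rintro ⟨h₁, h₂⟩
      obtain rfl : k = m := by omega
      exact ⟨hk, rfl⟩
    · rintro ⟨-, rfl⟩
      omega

/-- Let `p₁, p₂` be real polynomials and `z ∈ (0,1)` with `p₁(z) = p₂(z)`.
For `m ≥ 1`, the function `x ↦ min (p₁ x) (p₂ x)` is `(m-1)`-times
differentiable but not `m`-times differentiable at `z` (in the `C^n` sense,
with `0`-times differentiable meaning continuous) if and only if `p₁ - p₂`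
has a zero of odd order `m` at `z`. -/
theorem stmt_5 (p₁ p₂ : Polynomial ℝ) (z : ℝ) (hz : z ∈ Set.Ioo (0 : ℝ) 1)
    (heq : p₁.eval z = p₂.eval z) (m : ℕ) (hm : 1 ≤ m) :
    (ContDiffAt ℝ ((m - 1 : ℕ) : ℕ∞) (fun x => min (p₁.eval x) (p₂.eval x)) z ∧
      ¬ ContDiffAt ℝ ((m : ℕ) : ℕ∞) (fun x => min (p₁.eval x) (p₂.eval x)) z)
    ↔ (Odd m ∧ Polynomial.rootMultiplicity z (p₁ - p₂) = m) :=
  stmt_5_general p₁ p₂ z m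
end

section
/- Let b ≥ 1 be an integer, a/b ∈ [0,1] rational, and m ≥ 1. If f(p) = ∑_{i=0}^m b_i p^i(1-p)^{m-i} with integers |b_i| ≤ C(m,i) and f is not the zero polynomial, then f has no root p ∈ ℝ with 0 < |p - a/b| < (3b)^{-m}. -/
/-!
Shift the root to the origin: `Q(t) = f(a/b + t)` is again a Bernstein-type form
`∑ bᵢ (a/b + t)^i (1 - a/b - t)^(m-i)`. Since `b^m Q` has integer coefficients, its lowest
nonzero coefficient has absolute value at least `b^{-m}`; since `|X + a/b|₁ + |1 - a/b - X|₁ = 3`,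
the `ℓ¹`-norm of the coefficients of `Q` is at most `∑ C(m,i) (1 + a/b)^i (2 - a/b)^(m-i) = 3^m`.
At a root `t ≠ 0` with `|t| ≤ 1`, the lowest term `c_k t^k` is cancelled by the higher ones, so
`|c_k| ≤ |Q|₁ |t|`, whence `|t| ≥ (3b)^{-m}`.
-/

open Finset

namespace Polynomial

section L1Norm

variable {R : Type*} [NormedRing R]

noncomputable def l1Norm (p : R[X]) : ℝ :=
  p.sum fun _ a ↦ ‖a‖

lemma l1Norm_eq_sum_of_support_subset {p : R[X]} {s : Finset ℕ} (hs : p.support ⊆ s) :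
    p.l1Norm = ∑ n ∈ s, ‖p.coeff n‖ :=
  sum_eq_of_subset _ (fun _ ↦ norm_zero) hs

lemma l1Norm_nonneg (p : R[X]) : 0 ≤ p.l1Norm :=
  sum_nonneg fun _ _ ↦ norm_nonneg _

@[simp]
lemma l1Norm_zero : (0 : R[X]).l1Norm = 0 := by
  simp [l1Norm]

@[simp]
lemma l1Norm_monomial (n : ℕ) (a : R) : (monomial n a).l1Norm = ‖a‖ :=
  sum_monomial_index a _ norm_zero

@[simp]
lemma l1Norm_C (a : R) : (C a).l1Norm = ‖a‖ := by
  rw [← monomial_zero_left, l1Norm_monomial]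

@[simp]
lemma l1Norm_neg (p : R[X]) : (-p).l1Norm = p.l1Norm := by
  simp [l1Norm, sum_def]

lemma l1Norm_add_le (p q : R[X]) : (p + q).l1Norm ≤ p.l1Norm + q.l1Norm := by
  classical
  rw [l1Norm_eq_sum_of_support_subset support_add,
    l1Norm_eq_sum_of_support_subset (subset_union_left (s₂ := q.support)),
    l1Norm_eq_sum_of_support_subset (subset_union_right (s₁ := p.support)), ← sum_add_distrib]
  exact sum_le_sum fun n _ ↦ (coeff_add p q n).symm ▸ norm_add_le _ _

lemma l1Norm_sub_le (p q : R[X]) : (p - q).l1Norm ≤ p.l1Norm + q.l1Norm := by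
  simpa [sub_eq_add_neg] using l1Norm_add_le p (-q)

lemma l1Norm_sum_le {ι : Type*} (s : Finset ι) (f : ι → R[X]) :
    (∑ i ∈ s, f i).l1Norm ≤ ∑ i ∈ s, (f i).l1Norm :=
  le_sum_of_subadditive _ l1Norm_zero.le l1Norm_add_le s f

lemma l1Norm_mul_le (p q : R[X]) : (p * q).l1Norm ≤ p.l1Norm * q.l1Norm := by
  rw [mul_eq_sum_sum]
  refine (l1Norm_sum_le _ _).trans ?_
  simp only [l1Norm, sum_def, sum_mul_sum]
  refine sum_le_sum fun i _ ↦ (l1Norm_sum_le _ _).trans (sum_le_sum fun j _ ↦ ?_)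
  rw [l1Norm_monomial]
  exact norm_mul_le _ _

variable [NormOneClass R]

@[simp]
lemma l1Norm_one : (1 : R[X]).l1Norm = 1 := by
  rw [← C_1, l1Norm_C, norm_one]

@[simp]
lemma l1Norm_X : (X : R[X]).l1Norm = 1 := by
  simp [← monomial_one_one_eq_X]

lemma l1Norm_pow_le (p : R[X]) (n : ℕ) : (p ^ n).l1Norm ≤ p.l1Norm ^ n := by
  induction n with
  | zero => simp
  | succ n ih =>
    rw [pow_succ, pow_succ]
    exact (l1Norm_mul_le _ _).trans (mul_le_mul_of_nonneg_right ih (l1Norm_nonneg _))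

end L1Norm

lemma norm_trailingCoeff_le_l1Norm_mul {K : Type*} [NormedField K] {p : K[X]} {t : K}
    (hp : p.IsRoot t) (ht0 : t ≠ 0) (ht1 : ‖t‖ ≤ 1) :
    ‖p.trailingCoeff‖ ≤ p.l1Norm * ‖t‖ := by
  rcases eq_or_ne p 0 with rfl | hp0
  · simp
  set k := p.natTrailingDegree
  have hk := natTrailingDegree_mem_support_of_nonzero hp0
  have hlowest : p.coeff k * t ^ k = -∑ j ∈ p.support.erase k, p.coeff j * t ^ j := by
    have := hp.eq_zero
    rw [eval_eq_sum, sum_def, ← add_sum_erase _ _ hk] at this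
    exact eq_neg_of_add_eq_zero_left this
  refine le_of_mul_le_mul_right ?_ (pow_pos (norm_pos_iff.mpr ht0) k)
  calc ‖p.trailingCoeff‖ * ‖t‖ ^ k = ‖∑ j ∈ p.support.erase k, p.coeff j * t ^ j‖ := by
        rw [← norm_pow, ← norm_mul, trailingCoeff, hlowest, norm_neg]
    _ ≤ ∑ j ∈ p.support.erase k, ‖p.coeff j‖ * ‖t‖ ^ (k + 1) := by
        refine (norm_sum_le _ _).trans (sum_le_sum fun j hj ↦ ?_)
        have hkj : k < j :=
          (natTrailingDegree_le_of_mem_supp j (mem_of_mem_erase hj)).lt_of_ne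
            (ne_of_mem_erase hj).symm
        rw [norm_mul, norm_pow]
        exact mul_le_mul_of_nonneg_left (pow_le_pow_of_le_one (norm_nonneg t) ht1 hkj)
          (norm_nonneg _)
    _ ≤ p.l1Norm * ‖t‖ * ‖t‖ ^ k := by
        rw [← sum_mul, mul_assoc, ← pow_succ']
        exact mul_le_mul_of_nonneg_right
          (sum_le_sum_of_subset_of_nonneg (erase_subset _ _) fun _ _ _ ↦ norm_nonneg _)
          (by positivity)

noncomputable def bernsteinForm {R : Type*} [CommSemiring R] (m : ℕ) (c : ℕ → R)
    (u v : R[X]) : R[X] :=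
  ∑ i ∈ range (m + 1), C (c i) * u ^ i * v ^ (m - i)

section BernsteinForm

variable {R : Type*} [CommRing R] (m : ℕ) (c : ℕ → R) (u v : R[X])

lemma eval_bernsteinForm (t : R) :
    (bernsteinForm m c u v).eval t =
      ∑ i ∈ range (m + 1), c i * u.eval t ^ i * v.eval t ^ (m - i) := by
  simp [bernsteinForm, eval_finsetSum]

lemma map_bernsteinForm {S : Type*} [CommRing S] (φ : R →+* S) :
    (bernsteinForm m c u v).map φ = bernsteinForm m (φ ∘ c) (u.map φ) (v.map φ) := by
  simp [bernsteinForm, Polynomial.map_sum]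

lemma bernsteinForm_C_mul (s : R) :
    bernsteinForm m c (C s * u) (C s * v) = C (s ^ m) * bernsteinForm m c u v := by
  rw [bernsteinForm, bernsteinForm, mul_sum]
  refine sum_congr rfl fun i hi ↦ ?_
  have him : i + (m - i) = m := Nat.add_sub_cancel' (Nat.lt_succ_iff.mp (mem_range.mp hi))
  rw [mul_pow, mul_pow, ← him, pow_add, C_mul, ← C_pow, ← C_pow, him]
  ring

end BernsteinForm

lemma l1Norm_bernsteinForm_le {R : Type*} [NormedCommRing R] [NormOneClass R] (m : ℕ)
    (c : ℕ → R) (u v : R[X]) :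
    (bernsteinForm m c u v).l1Norm ≤
      ∑ i ∈ range (m + 1), ‖c i‖ * u.l1Norm ^ i * v.l1Norm ^ (m - i) := by
  refine (l1Norm_sum_le _ _).trans (sum_le_sum fun i _ ↦ ?_)
  have hCu : (C (c i) * u ^ i).l1Norm ≤ ‖c i‖ * u.l1Norm ^ i :=
    (l1Norm_mul_le _ _).trans
      (by rw [l1Norm_C]; exact mul_le_mul_of_nonneg_left (l1Norm_pow_le _ _) (norm_nonneg _))
  exact (l1Norm_mul_le _ _).trans (mul_le_mul hCu (l1Norm_pow_le _ _) (l1Norm_nonneg _)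
    (mul_nonneg (norm_nonneg _) (pow_nonneg (l1Norm_nonneg _) _)))

lemma one_le_abs_mul_coeff_of_map_intCast_eq {p : ℤ[X]} {q : ℝ[X]} {s : ℝ} (hs : s ≠ 0)
    (h : p.map (Int.castRingHom ℝ) = C s * q) {n : ℕ} (hq : q.coeff n ≠ 0) :
    1 ≤ |s * q.coeff n| := by
  have hcoeff : (p.coeff n : ℝ) = s * q.coeff n := by
    simpa using congrArg (coeff · n) h
  rw [← hcoeff, ← Int.cast_abs, ← Int.cast_one, Int.cast_le]
  exact Int.one_le_abs (by exact_mod_cast hcoeff ▸ mul_ne_zero hs hq)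

lemma map_bernsteinForm_intCast (m : ℕ) (c : ℕ → ℤ) {a b : ℕ} (hb : (b : ℝ) ≠ 0) :
    (bernsteinForm m c (C (a : ℤ) + C (b : ℤ) * X) (C ((b : ℤ) - a) - C (b : ℤ) * X)).map
        (Int.castRingHom ℝ) =
      C ((b : ℝ) ^ m) *
        bernsteinForm m (fun i ↦ (c i : ℝ)) (C (a / b : ℝ) + X) (C (1 - a / b : ℝ) - X) := by
  have hbr : (b : ℝ) * (a / b) = a := mul_div_cancel₀ _ hb
  rw [map_bernsteinForm, ← bernsteinForm_C_mul]
  congr 1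
  · simp only [Polynomial.map_add, Polynomial.map_mul, Polynomial.map_C, map_X,
      Int.coe_castRingHom, Int.cast_natCast, mul_add, ← C_mul, hbr]
  · simp only [Polynomial.map_sub, Polynomial.map_mul, Polynomial.map_C, map_X,
      Int.coe_castRingHom, Int.cast_sub, Int.cast_natCast, mul_sub, ← C_mul, mul_one, hbr]

lemma l1Norm_bernsteinForm_shift_le (m : ℕ) (c : ℕ → ℤ)
    (hc : ∀ i ≤ m, |c i| ≤ (m.choose i : ℤ)) {r : ℝ} (hr0 : 0 ≤ r) (hr1 : r ≤ 1) :
    (bernsteinForm m (fun i ↦ (c i : ℝ)) (C r + X) (C (1 - r) - X)).l1Norm ≤ 3 ^ m := by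
  have hu : (C r + X).l1Norm ≤ r + 1 := by
    simpa [abs_of_nonneg hr0] using l1Norm_add_le (C r) X
  have hv : (C (1 - r) - X).l1Norm ≤ (1 - r) + 1 := by
    refine (l1Norm_sub_le _ _).trans ?_
    rw [l1Norm_C, l1Norm_X, Real.norm_eq_abs, abs_of_nonneg (sub_nonneg.mpr hr1)]
  calc _ ≤ ∑ i ∈ range (m + 1),
          ‖(c i : ℝ)‖ * (C r + X).l1Norm ^ i * (C (1 - r) - X).l1Norm ^ (m - i) :=
        l1Norm_bernsteinForm_le m _ _ _
    _ ≤ ∑ i ∈ range (m + 1), (m.choose i : ℝ) * (r + 1) ^ i * ((1 - r) + 1) ^ (m - i) := by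
        refine sum_le_sum fun i hi ↦ ?_
        have hci : ‖(c i : ℝ)‖ ≤ m.choose i := by
          rw [Real.norm_eq_abs, ← Int.cast_abs]
          exact_mod_cast hc i (Nat.lt_succ_iff.mp (mem_range.mp hi))
        have := l1Norm_nonneg (C r + X)
        have := l1Norm_nonneg (C (1 - r) - X)
        gcongr
    _ = 3 ^ m := by
        rw [show (3 : ℝ) = (r + 1) + ((1 - r) + 1) by ring, add_pow]
        exact sum_congr rfl fun i _ ↦ by ring

end Polynomial

open Polynomial

theorem stmt_9_general (a b m : ℕ) (hb : 1 ≤ b) (hab : a ≤ b)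
    (bi : ℕ → ℤ) (hbi : ∀ i ≤ m, |bi i| ≤ (m.choose i : ℤ))
    (hne : ∃ p : ℝ,
      (∑ i ∈ Finset.range (m + 1), (bi i : ℝ) * p ^ i * (1 - p) ^ (m - i)) ≠ 0) :
    ∀ p : ℝ, 0 < |p - (a : ℝ) / (b : ℝ)| →
      |p - (a : ℝ) / (b : ℝ)| < 1 / (3 * (b : ℝ)) ^ m →
      (∑ i ∈ Finset.range (m + 1), (bi i : ℝ) * p ^ i * (1 - p) ^ (m - i)) ≠ 0 := by
  intro p hpos hlt hroot
  set r : ℝ := (a : ℝ) / (b : ℝ)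
  have hb1 : (1 : ℝ) ≤ b := by exact_mod_cast hb
  have hb0 : (b : ℝ) ≠ 0 := by positivity
  have hr1 : r ≤ 1 := div_le_one_of_le₀ (by exact_mod_cast hab) (Nat.cast_nonneg _)
  set Q := bernsteinForm m (fun i ↦ (bi i : ℝ)) (C r + X) (C (1 - r) - X)
  have hQ_eval (q : ℝ) :
      Q.eval (q - r) = ∑ i ∈ range (m + 1), (bi i : ℝ) * q ^ i * (1 - q) ^ (m - i) := by
    simp [Q, eval_bernsteinForm]
  have hQ0 : Q ≠ 0 := by
    obtain ⟨q, hq⟩ := hne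
    exact fun hQ ↦ hq (by rw [← hQ_eval, hQ, eval_zero])
  have hlow : 1 ≤ |(b : ℝ) ^ m * Q.trailingCoeff| :=
    one_le_abs_mul_coeff_of_map_intCast_eq (pow_ne_zero _ hb0)
      (map_bernsteinForm_intCast m bi hb0) (trailingCoeff_nonzero_iff_nonzero.mpr hQ0)
  have ht1 : |p - r| ≤ 1 :=
    hlt.le.trans (div_le_one_of_le₀ (one_le_pow₀ (by linarith)) (by positivity))
  have hup : |Q.trailingCoeff| ≤ Q.l1Norm * |p - r| :=
    norm_trailingCoeff_le_l1Norm_mul (by rw [IsRoot, hQ_eval, hroot]) (abs_pos.mp hpos) ht1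
  have hl1 : Q.l1Norm ≤ 3 ^ m := l1Norm_bernsteinForm_shift_le m bi hbi (by positivity) hr1
  have hbm : (0 : ℝ) < b ^ m := by positivity
  refine (calc (1 : ℝ)
      ≤ b ^ m * |Q.trailingCoeff| := by rwa [abs_mul, abs_of_pos hbm] at hlow
    _ ≤ b ^ m * (3 ^ m * |p - r|) := by gcongr; exact hup.trans (by gcongr)
    _ < b ^ m * (3 ^ m * (1 / (3 * b) ^ m)) := by gcongr
    _ = 1 := by field_simp; ring).false

/-- Breakpoint exclusion: if `f(p) = ∑_{i=0}^m b_i p^i (1-p)^{m-i}` with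
integers `|b_i| ≤ C(m,i)` is not identically zero, `m ≥ 1`, and `a/b ∈ [0,1]`
is rational with `b ≥ 1`, then `f` has no root `p` with
`0 < |p - a/b| < (3b)^{-m}`. -/
theorem stmt_9 (a b m : ℕ) (hb : 1 ≤ b) (hab : a ≤ b) (hm : 1 ≤ m)
    (bi : ℕ → ℤ) (hbi : ∀ i ≤ m, |bi i| ≤ (m.choose i : ℤ))
    (hne : ∃ p : ℝ,
      (∑ i ∈ Finset.range (m + 1), (bi i : ℝ) * p ^ i * (1 - p) ^ (m - i)) ≠ 0) :
    ∀ p : ℝ, 0 < |p - (a : ℝ) / (b : ℝ)| →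
      |p - (a : ℝ) / (b : ℝ)| < 1 / (3 * (b : ℝ)) ^ m →
      (∑ i ∈ Finset.range (m + 1), (bi i : ℝ) * p ^ i * (1 - p) ^ (m - i)) ≠ 0 :=
  stmt_9_general a b m hb hab bi hbi hne
end

section
/- Let G be a simple graph with distinguished vertices s, r and d(s,r) = k. Let A^{(k+1)} be the set of instructions uvw (u, w distinct neighbors of v) contained in some s,r-path of length at most k+1. Then for every instruction uvw ∈ A^{(k+1)}, d(s,u) < d(s,w). -/
/-!
A vertex at position `j` of an `s,r`-walk `P` is within `P.length - j` of `r`, so by the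
triangle inequality it is at distance at least `d(s,r) - (P.length - j)` from `s`, while the
vertex at position `i` is within `i` of `s`. When `P` is at most `m` steps longer than a
shortest `s,r`-walk, any two positions more than `m` apart are therefore strictly ordered by
their distance from `s`; an instruction spans two steps, and `m = 1`.
-/

namespace SimpleGraph.Walk

variable {V : Type*} {G : SimpleGraph V} {s r : V}

lemma dist_getVert_le (P : G.Walk s r) (n : ℕ) : G.dist s (P.getVert n) ≤ n :=
  (dist_le (P.take n)).trans <| by simp [take_length]

lemma dist_getVert_right_le (P : G.Walk s r) (n : ℕ) :
    G.dist (P.getVert n) r ≤ P.length - n :=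
  (dist_le (P.drop n)).trans_eq (drop_length P n)

lemma dist_getVert_lt_of_length_le {P : G.Walk s r} {m i j : ℕ}
    (hP : P.length ≤ G.dist s r + m) (hj : j ≤ P.length) (hij : i + m < j) :
    G.dist s (P.getVert i) < G.dist s (P.getVert j) := by
  have hsr : G.dist s r ≤ G.dist s (P.getVert j) + G.dist (P.getVert j) r :=
    (P.drop j).reachable.dist_triangle_right s
  have := P.dist_getVert_le i
  have := P.dist_getVert_right_le j
  omega

end SimpleGraph.Walk

/-- Let `G` be a simple graph with `d(s,r) = k`.  If the instruction `u v w`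
is contained in some `s,r`-path of length at most `k+1`, then
`d(s,u) < d(s,w)`. -/
theorem stmt_11 {V : Type*} (G : SimpleGraph V) (s r : V) (k : ℕ)
    (hk : G.dist s r = k) (u v w : V)
    (hins : ∃ P : G.Walk s r, P.IsPath ∧ P.length ≤ k + 1 ∧
      ∃ i, i + 2 ≤ P.length ∧ P.getVert i = u ∧ P.getVert (i + 1) = v ∧
        P.getVert (i + 2) = w) :
    G.dist s u < G.dist s w := by
  obtain ⟨P, -, hlen, i, hi, rfl, -, rfl⟩ := hins
  exact P.dist_getVert_lt_of_length_le (hk ▸ hlen) hi (by omega)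
end
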